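/- Let S be an m-Noetherian commutative semiring, i.e., every S-subsemimodule of every finitely generated free S-semimodule S^n is finitely generated. Then for any index sets Λ and Λ', the canonical S-linear map β : (Λ → S) ⊗_S (Λ' → S) → (Λ × Λ' → S), f ⊗ f' ↦ ((λ, λ') ↦ f(λ)·f'(λ')), is injective. -/

import Mathlib

/-!
STATEMENT 4: Let `S` be an m-Noetherian commutative semiring (every
`S`-subsemimodule of `Sⁿ` is finitely generated for every `n`). Then for any
index sets `Λ`, `Λ'` the canonical `S`-linear map
`β : (Λ → S) ⊗[S] (Λ' → S) → (Λ × Λ' → S)`, `f ⊗ f' ↦ ((λ, λ') ↦ f λ · f' λ')`,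
is injective.
-/

open TensorProduct

variable (S : Type*) [CommSemiring S]

/-- The canonical map `(Λ → S) ⊗[S] (Λ' → S) →ₗ[S] (Λ × Λ' → S)` sending
`f ⊗ f'` to `(λ, λ') ↦ f λ * f' λ'`. -/
noncomputable def piTensorToFun (Λ Λ' : Type*) :
    ((Λ → S) ⊗[S] (Λ' → S)) →ₗ[S] (Λ × Λ' → S) :=
  TensorProduct.lift <| LinearMap.mk₂ S (fun f f' p => f p.1 * f' p.2)
    (fun f g f' => by funext p; simp [add_mul])
    (fun c f f' => by funext p; simp [smul_eq_mul, mul_assoc])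
    (fun f f' g' => by funext p; simp [mul_add])
    (fun c f f' => by funext p; simp [smul_eq_mul, mul_left_comm])

/-!
Any two tensors lie in the image of `M ⊗ (Λ' → S)` for a finitely generated
`M = span {g₁, …, gₙ} ≤ (Λ → S)`. The vectors `(g₁ l, …, gₙ l) ∈ Sⁿ`, `l ∈ Λ`, span a
subsemimodule of `Sⁿ`, which by m-Noetherianity is already spanned by finitely many of them,
say those at `v ∈ t`. Writing `(gᵢ l)ᵢ = ∑ᵥ r v l • (gᵢ v)ᵢ` gives `f = ∑ᵥ f v • r v` for every
`f ∈ M`, hence `x = ∑ᵥ r v ⊗ β x (v, ·)` for every `x` in that image: `x` is recovered from `β x`.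
-/

theorem Submodule.exists_finset_span_image_eq_of_fg {R M ι : Type*} [Semiring R]
    [AddCommMonoid M] [Module R M] {φ : ι → M} (h : (span R (Set.range φ)).FG) :
    ∃ t : Finset ι, span R (φ '' t) = span R (Set.range φ) := by
  classical
  obtain ⟨s, hs, hspan⟩ := (fg_span_iff_fg_span_finset_subset _).1 h
  obtain ⟨t, -, rfl⟩ := Finset.subset_set_image_iff.1 (Set.image_univ (f := φ) ▸ hs)
  exact ⟨t, by rw [hspan, Finset.coe_image]⟩

theorem exists_finset_sum_eval_smul_eq {R Λ : Type*} [CommSemiring R] {n : ℕ}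
    (g : Fin n → Λ → R) (hg : (Submodule.span R (Set.range (Function.swap g))).FG) :
    ∃ (t : Finset Λ) (r : Λ → Λ → R),
      ∀ f ∈ Submodule.span R (Set.range g), ∑ v ∈ t, f v • r v = f := by
  obtain ⟨t, ht⟩ := Submodule.exists_finset_span_image_eq_of_fg hg
  have hmem (l : Λ) : Function.swap g l ∈ Submodule.span R (Function.swap g '' t) :=
    ht ▸ Submodule.subset_span (Set.mem_range_self l)
  choose c hc using fun l => (Submodule.mem_span_image_finset_iff_exists_fun' R).1 (hmem l)
  refine ⟨t, fun v l => c l v, fun f hf => ?_⟩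
  let interpolate : (Λ → R) →ₗ[R] (Λ → R) :=
    ∑ v ∈ t, (LinearMap.proj v).smulRight (fun l => c l v)
  calc ∑ v ∈ t, f v • (fun l => c l v) = interpolate f := by simp [interpolate]
    _ = f := LinearMap.eqOn_span (g := LinearMap.id) ?_ hf
  rintro _ ⟨i, rfl⟩
  funext l
  simpa [interpolate, mul_comm] using congrFun (hc l) i

@[simp]
theorem piTensorToFun_tmul {Λ Λ' : Type*} (f : Λ → S) (f' : Λ' → S) :
    piTensorToFun S Λ Λ' (f ⊗ₜ f') = fun p => f p.1 * f' p.2 :=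
  rfl

theorem sum_tmul_piTensorToFun_eq {Λ Λ' : Type*} {M : Submodule S (Λ → S)} {t : Finset Λ}
    {r : Λ → Λ → S} (hr : ∀ f ∈ M, ∑ v ∈ t, f v • r v = f) {x : (Λ → S) ⊗[S] (Λ' → S)}
    (hx : x ∈ LinearMap.range (M.subtype.rTensor (Λ' → S))) :
    ∑ v ∈ t, r v ⊗ₜ (fun l' => piTensorToFun S Λ Λ' x (v, l')) = x := by
  obtain ⟨y, rfl⟩ := hx
  induction y using TensorProduct.induction_on with
  | zero => simp [← Pi.zero_def]
  | tmul f f' =>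
    calc ∑ v ∈ t, r v ⊗ₜ[S] (fun l' => f.1 v * f' l')
        = ∑ v ∈ t, (f.1 v • r v) ⊗ₜ[S] f' := by
          refine Finset.sum_congr rfl fun v _ => ?_
          rw [smul_tmul]
          rfl
      _ = f.1 ⊗ₜ f' := by rw [← sum_tmul, hr f.1 f.2]
  | add y z hy hz =>
    conv_rhs => rw [map_add, ← hy, ← hz, ← Finset.sum_add_distrib]
    refine Finset.sum_congr rfl fun v _ => ?_
    rw [← tmul_add, map_add, map_add]
    rfl

theorem piTensorToFun_injective_of_mNoetherian
    (hNoeth : ∀ (n : ℕ) (N : Submodule S (Fin n → S)), N.FG)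
    (Λ Λ' : Type*) :
    Function.Injective (piTensorToFun S Λ Λ') := by
  intro x y hxy
  obtain ⟨M, hM, hxyM⟩ := exists_finite_submodule_left_of_setFinite {x, y} (Set.toFinite _)
  obtain ⟨n, g, rfl⟩ :=
    Submodule.fg_iff_exists_fin_generating_family.1 (Module.Finite.iff_fg.1 hM)
  obtain ⟨t, r, hr⟩ := exists_finset_sum_eval_smul_eq g (hNoeth n _)
  rw [← sum_tmul_piTensorToFun_eq S hr (x := x) (hxyM (by simp)),
    ← sum_tmul_piTensorToFun_eq S hr (x := y) (hxyM (by simp)), hxy]
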